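/- Let A₁, A₂ : (0,∞) → (0,∞) be continuous, integrable in a neighborhood of zero but not integrable in a neighborhood of infinity, with A₁(t) ≥ A₂(t) for all t > 0. Then for all 0 ≤ s ≤ t one has Φ_{A₁}(t) · Φ_{A₂}(s) ≤ Φ_{A₂}(t) · Φ_{A₁}(s); equivalently, the ratio Φ_{A₁}/Φ_{A₂} is nonincreasing on [0,∞). -/

import Mathlib

/-!
Multiplying `Φ'' = A Φ` by `Φ` gives `(Φ Φ')' = Φ'² + A Φ² ≥ 0`; if `Φ Φ'` were positive somewhere,
`Φ²` would grow at least linearly, contradicting boundedness. Hence `Φ²` is nonincreasing, so a zero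
of `Φ` would make `Φ` vanish on a half-line, and uniqueness for the linear system `(Φ, Φ')` would
propagate this back to `t = 0`, where `Φ = 1`. Thus `Φ > 0`, `Φ' ≤ 0` and `Φ ≤ 1`.

The Wronskian `W = Φ₂ Φ₁' - Φ₂' Φ₁` satisfies `W' = (A₁ - A₂) Φ₁ Φ₂ ≥ 0`. If `W > 0` somewhere,
then `-Φ₂' ≥ -Φ₂' Φ₁ ≥ W` stays above a positive constant and `Φ₂` eventually becomes negative.
So `W ≤ 0`, which is `(Φ₁ / Φ₂)' = W / Φ₂² ≤ 0`.
-/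

open MeasureTheory Filter Set

/-- Hypotheses on the coefficient `A` of the Sturm–Liouville equation: continuous and
strictly positive on `(0,∞)`, integrable in a neighborhood of zero, but not integrable
in a neighborhood of infinity. -/
def SLHyp (A : ℝ → ℝ) : Prop :=
  ContinuousOn A (Set.Ioi 0) ∧ (∀ t > (0:ℝ), 0 < A t) ∧
  MeasureTheory.IntegrableOn A (Set.Ioc 0 1) ∧
  (∫⁻ t in Set.Ici (1:ℝ), ENNReal.ofReal (A t)) = ⊤

/-- `Φ` is a bounded continuous function on `[0,∞)` with `Φ 0 = 1`, twice differentiable on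
`(0,∞)` and satisfying the Sturm–Liouville equation `Φ'' = A Φ` there. -/
def IsSL (A Φ : ℝ → ℝ) : Prop :=
  ContinuousOn Φ (Set.Ici 0) ∧
  (∃ M : ℝ, ∀ t ≥ (0:ℝ), |Φ t| ≤ M) ∧
  Φ 0 = 1 ∧
  (∀ t > (0:ℝ), DifferentiableAt ℝ Φ t) ∧
  (∀ t > (0:ℝ), HasDerivAt (deriv Φ) (A t * Φ t) t)

open Topology

lemma monotoneOn_Ici_of_hasDerivAt_nonneg {f f' : ℝ → ℝ} {a : ℝ}
    (hf : ∀ x ≥ a, HasDerivAt f (f' x) x) (hf' : ∀ x > a, 0 ≤ f' x) :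
    MonotoneOn f (Ici a) :=
  monotoneOn_of_hasDerivWithinAt_nonneg (convex_Ici a)
    (fun x hx => (hf x hx).continuousAt.continuousWithinAt)
    (fun x hx => (hf x (le_of_lt (by rwa [interior_Ici] at hx))).hasDerivWithinAt)
    (fun x hx => hf' x (by rwa [interior_Ici] at hx))

lemma tendsto_atTop_of_hasDerivAt_ge {f f' : ℝ → ℝ} {a c : ℝ} (hc : 0 < c)
    (hf : ∀ x ≥ a, HasDerivAt f (f' x) x) (hf' : ∀ x ≥ a, c ≤ f' x) :
    Tendsto f atTop atTop := by
  have hmono : MonotoneOn (fun x => f x - c * x) (Ici a) :=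
    monotoneOn_Ici_of_hasDerivAt_nonneg
      (fun x hx => (hf x hx).sub ((hasDerivAt_id x).const_mul c))
      (fun x hx => by simpa using hf' x hx.le)
  have hlin : Tendsto (fun x => f a - c * a + c * x) atTop atTop :=
    tendsto_atTop_add_const_left _ _ (tendsto_id.const_mul_atTop hc)
  refine tendsto_atTop_mono' _ ?_ hlin
  filter_upwards [eventually_ge_atTop a] with x hx
  linarith [hmono self_mem_Ici hx hx]

lemma lipschitzWith_snd_prodMk_mul_fst (a : ℝ) :
    LipschitzWith (max 1 ‖a‖₊) (fun x : ℝ × ℝ => (x.2, a * x.1)) := by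
  have h := (LipschitzWith.prod_snd (α := ℝ) (β := ℝ)).prodMk
    ((lipschitzWith_smul (β := ℝ) a).comp LipschitzWith.prod_fst)
  rw [mul_one] at h
  exact h

namespace IsSL

variable {A Φ : ℝ → ℝ}

lemma continuousOn (h : IsSL A Φ) : ContinuousOn Φ (Ici 0) := h.1

lemma exists_abs_le (h : IsSL A Φ) : ∃ M : ℝ, ∀ t ≥ 0, |Φ t| ≤ M := h.2.1

lemma map_zero (h : IsSL A Φ) : Φ 0 = 1 := h.2.2.1

lemma hasDerivAt (h : IsSL A Φ) {t : ℝ} (ht : 0 < t) : HasDerivAt Φ (deriv Φ t) t :=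
  (h.2.2.2.1 t ht).hasDerivAt

lemma hasDerivAt_deriv (h : IsSL A Φ) {t : ℝ} (ht : 0 < t) :
    HasDerivAt (deriv Φ) (A t * Φ t) t :=
  h.2.2.2.2 t ht

lemma hasDerivAt_sq (h : IsSL A Φ) {t : ℝ} (ht : 0 < t) :
    HasDerivAt (fun s => Φ s ^ 2) (2 * (Φ t * deriv Φ t)) t :=
  ((h.hasDerivAt ht).fun_pow 2).congr_deriv (by ring)

lemma mul_deriv_nonpos (h : IsSL A Φ) (hA : ∀ t > 0, 0 ≤ A t) {t : ℝ} (ht : 0 < t) :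
    Φ t * deriv Φ t ≤ 0 := by
  by_contra! hpos
  have hmono : MonotoneOn (fun s => Φ s * deriv Φ s) (Ici t) :=
    monotoneOn_Ici_of_hasDerivAt_nonneg
      (fun s hs => (h.hasDerivAt (ht.trans_le hs)).mul (h.hasDerivAt_deriv (ht.trans_le hs)))
      (fun s hs => by
        have := hA s (ht.trans hs)
        nlinarith [mul_self_nonneg (deriv Φ s), mul_nonneg this (mul_self_nonneg (Φ s))])
  have hgrow : Tendsto (fun s => Φ s ^ 2) atTop atTop :=
    tendsto_atTop_of_hasDerivAt_ge (by positivity : 0 < 2 * (Φ t * deriv Φ t))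
      (fun s hs => h.hasDerivAt_sq (ht.trans_le hs))
      (fun s hs => by linarith [hmono self_mem_Ici hs hs])
  obtain ⟨M, hM⟩ := h.exists_abs_le
  obtain ⟨s, hs, hs0⟩ := ((hgrow.eventually_gt_atTop (M ^ 2)).and (eventually_ge_atTop 0)).exists
  nlinarith [hM s hs0, abs_nonneg (Φ s), sq_abs (Φ s)]

lemma antitoneOn_sq (h : IsSL A Φ) (hA : ∀ t > 0, 0 ≤ A t) :
    AntitoneOn (fun t => Φ t ^ 2) (Ici 0) :=
  antitoneOn_of_hasDerivWithinAt_nonpos (convex_Ici 0) (h.continuousOn.pow 2)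
    (fun t ht => (h.hasDerivAt_sq (by rwa [interior_Ici] at ht)).hasDerivWithinAt)
    (fun t ht => by
      have := h.mul_deriv_nonpos hA (by rwa [interior_Ici] at ht)
      linarith)

lemma eqOn_zero_of_eq_zero_of_deriv_eq_zero (h : IsSL A Φ) (hAc : ContinuousOn A (Ioi 0))
    {a b : ℝ} (ha : 0 < a) (hΦb : Φ b = 0) (hΦ'b : deriv Φ b = 0) :
    EqOn Φ 0 (Icc a b) := by
  obtain ⟨C, hC⟩ := isCompact_Icc.exists_bound_of_continuousOn
    (hAc.mono fun t (ht : t ∈ Icc a b) => ha.trans_le ht.1)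
  have hAC : ∀ t ∈ Icc a b, ‖A t‖₊ ≤ C.toNNReal := fun t ht => by
    rw [← NNReal.coe_le_coe, coe_nnnorm, Real.coe_toNNReal']
    exact (hC t ht).trans (le_max_left _ _)
  have hv : ∀ t ∈ Ioc a b, LipschitzOnWith (max 1 C.toNNReal)
      (fun x : ℝ × ℝ => (x.2, A t * x.1)) univ := fun t ht =>
    ((lipschitzWith_snd_prodMk_mul_fst (A t)).weaken
      (max_le_max le_rfl (hAC t (Ioc_subset_Icc_self ht)))).lipschitzOnWith
  have hsol : ∀ t ∈ Icc a b, HasDerivAt (fun s => (Φ s, deriv Φ s)) (deriv Φ t, A t * Φ t) t :=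
    fun t ht => (h.hasDerivAt (ha.trans_le ht.1)).prodMk (h.hasDerivAt_deriv (ha.trans_le ht.1))
  have huniq := ODE_solution_unique_of_mem_Icc_left hv
    (fun t ht => (hsol t ht).continuousAt.continuousWithinAt)
    (fun t ht => (hsol t (Ioc_subset_Icc_self ht)).hasDerivWithinAt) (fun _ _ => mem_univ _)
    (g := fun _ => 0) continuousOn_const
    (fun t _ => by simpa [Prod.mk_zero_zero] using hasDerivWithinAt_const t (Iic t) (0 : ℝ × ℝ))
    (fun _ _ => mem_univ _) (Prod.ext hΦb hΦ'b)
  exact fun t ht => congrArg Prod.fst (huniq ht)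

lemma eq_zero_of_eq_zero_of_le (h : IsSL A Φ) (hA : ∀ t > 0, 0 ≤ A t) {z t : ℝ} (hz : 0 ≤ z)
    (hzt : z ≤ t) (hΦz : Φ z = 0) : Φ t = 0 :=
  pow_eq_zero_iff two_ne_zero |>.1 <| le_antisymm
    (by simpa [hΦz] using h.antitoneOn_sq hA hz (hz.trans hzt) hzt) (sq_nonneg _)

lemma ne_zero (h : IsSL A Φ) (hAc : ContinuousOn A (Ioi 0)) (hA : ∀ t > 0, 0 ≤ A t) {z : ℝ}
    (hz : 0 ≤ z) : Φ z ≠ 0 := by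
  intro hΦz
  set b := z + 1
  have hΦb : Φ =ᶠ[𝓝 b] 0 := eventually_of_mem (Ioi_mem_nhds (by linarith : z < b))
    fun t ht => h.eq_zero_of_eq_zero_of_le hA hz (le_of_lt ht) hΦz
  have hvanish : ∀ t ∈ Ioc 0 b, Φ t = 0 := fun t ht =>
    h.eqOn_zero_of_eq_zero_of_deriv_eq_zero hAc ht.1 hΦb.eq_of_nhds (by simp [hΦb.deriv_eq])
      ⟨le_rfl, ht.2⟩
  have hlim : Tendsto Φ (𝓝[>] 0) (𝓝 (Φ 0)) :=
    (h.continuousOn 0 self_mem_Ici).mono_left (nhdsWithin_mono _ Ioi_subset_Ici_self)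
  have hlim₀ : Tendsto Φ (𝓝[>] 0) (𝓝 0) :=
    tendsto_const_nhds.congr' <| eventually_of_mem (Ioc_mem_nhdsGT (by linarith : (0:ℝ) < b))
      fun t ht => (hvanish t ht).symm
  have := tendsto_nhds_unique hlim hlim₀
  rw [h.map_zero] at this
  exact one_ne_zero this

lemma pos (h : IsSL A Φ) (hAc : ContinuousOn A (Ioi 0)) (hA : ∀ t > 0, 0 ≤ A t) {t : ℝ}
    (ht : 0 ≤ t) : 0 < Φ t := by
  by_contra! hΦt
  obtain ⟨z, hz, hΦz⟩ := intermediate_value_Icc' ht (h.continuousOn.mono Icc_subset_Ici_self)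
    ⟨hΦt, h.map_zero ▸ zero_le_one⟩
  exact h.ne_zero hAc hA hz.1 hΦz

lemma deriv_nonpos (h : IsSL A Φ) (hAc : ContinuousOn A (Ioi 0)) (hA : ∀ t > 0, 0 ≤ A t)
    {t : ℝ} (ht : 0 < t) : deriv Φ t ≤ 0 :=
  nonpos_of_mul_nonpos_right (h.mul_deriv_nonpos hA ht) (h.pos hAc hA ht.le)

lemma le_one (h : IsSL A Φ) (hA : ∀ t > 0, 0 ≤ A t) {t : ℝ} (ht : 0 ≤ t) : Φ t ≤ 1 := by
  have : Φ t ^ 2 ≤ Φ 0 ^ 2 := h.antitoneOn_sq hA self_mem_Ici ht ht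
  rw [h.map_zero, one_pow, sq_le_one_iff_abs_le_one] at this
  exact (abs_le.1 this).2

end IsSL

section Comparison

variable {A₁ A₂ Φ₁ Φ₂ : ℝ → ℝ}

lemma hasDerivAt_wronskian (h₁ : IsSL A₁ Φ₁) (h₂ : IsSL A₂ Φ₂) {t : ℝ} (ht : 0 < t) :
    HasDerivAt (fun s => Φ₂ s * deriv Φ₁ s - deriv Φ₂ s * Φ₁ s)
      ((A₁ t - A₂ t) * (Φ₁ t * Φ₂ t)) t :=
  (((h₂.hasDerivAt ht).mul (h₁.hasDerivAt_deriv ht)).sub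
    ((h₂.hasDerivAt_deriv ht).mul (h₁.hasDerivAt ht))).congr_deriv (by ring)

lemma wronskian_nonpos (h₁ : IsSL A₁ Φ₁) (h₂ : IsSL A₂ Φ₂)
    (hA₁c : ContinuousOn A₁ (Ioi 0)) (hA₁ : ∀ t > 0, 0 ≤ A₁ t)
    (hA₂c : ContinuousOn A₂ (Ioi 0)) (hA₂ : ∀ t > 0, 0 ≤ A₂ t)
    (hle : ∀ t > 0, A₂ t ≤ A₁ t) {t : ℝ} (ht : 0 < t) :
    Φ₂ t * deriv Φ₁ t - deriv Φ₂ t * Φ₁ t ≤ 0 := by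
  by_contra! hW
  set W := fun s => Φ₂ s * deriv Φ₁ s - deriv Φ₂ s * Φ₁ s
  have hmono : MonotoneOn W (Ici t) :=
    monotoneOn_Ici_of_hasDerivAt_nonneg
      (fun s hs => hasDerivAt_wronskian h₁ h₂ (ht.trans_le hs))
      (fun s hs => mul_nonneg (sub_nonneg.2 (hle s (ht.trans hs)))
        (mul_pos (h₁.pos hA₁c hA₁ (ht.trans hs).le) (h₂.pos hA₂c hA₂ (ht.trans hs).le)).le)
  have hslope : ∀ s ≥ t, W t ≤ -deriv Φ₂ s := fun s hs => by
    have hs₀ : 0 < s := ht.trans_le hs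
    have hΦ₁ := h₁.pos hA₁c hA₁ hs₀.le
    have hΦ₁' := mul_nonpos_of_nonneg_of_nonpos (h₂.pos hA₂c hA₂ hs₀.le).le
      (h₁.deriv_nonpos hA₁c hA₁ hs₀)
    have hWs : W t ≤ -deriv Φ₂ s * Φ₁ s := by linarith [hmono self_mem_Ici hs hs]
    nlinarith [h₁.le_one hA₁ hs₀.le]
  have hgrow : Tendsto (fun s => -Φ₂ s) atTop atTop :=
    tendsto_atTop_of_hasDerivAt_ge hW (fun s hs => (h₂.hasDerivAt (ht.trans_le hs)).neg) hslope
  obtain ⟨s, hs, hs₀⟩ := ((hgrow.eventually_gt_atTop 0).and (eventually_ge_atTop 0)).exists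
  linarith [h₂.pos hA₂c hA₂ hs₀]

lemma antitoneOn_div (h₁ : IsSL A₁ Φ₁) (h₂ : IsSL A₂ Φ₂)
    (hA₁c : ContinuousOn A₁ (Ioi 0)) (hA₁ : ∀ t > 0, 0 ≤ A₁ t)
    (hA₂c : ContinuousOn A₂ (Ioi 0)) (hA₂ : ∀ t > 0, 0 ≤ A₂ t)
    (hle : ∀ t > 0, A₂ t ≤ A₁ t) :
    AntitoneOn (fun t => Φ₁ t / Φ₂ t) (Ici 0) := by
  have hΦ₂ : ∀ t ≥ 0, Φ₂ t ≠ 0 := fun t ht => (h₂.pos hA₂c hA₂ ht).ne'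
  refine antitoneOn_of_hasDerivWithinAt_nonpos
    (f' := fun t => (deriv Φ₁ t * Φ₂ t - Φ₁ t * deriv Φ₂ t) / Φ₂ t ^ 2)
    (convex_Ici 0) (h₁.continuousOn.div h₂.continuousOn hΦ₂) (fun t ht => ?_) (fun t ht => ?_)
  all_goals rw [interior_Ici] at ht
  · exact ((h₁.hasDerivAt ht).div (h₂.hasDerivAt ht) (hΦ₂ t ht.le)).hasDerivWithinAt
  · have := wronskian_nonpos h₁ h₂ hA₁c hA₁ hA₂c hA₂ hle ht
    exact div_nonpos_of_nonpos_of_nonneg (by linarith) (sq_nonneg _)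

end Comparison

theorem ratio_of_solutions_nonincreasing
    (A₁ A₂ Φ₁ Φ₂ : ℝ → ℝ) (hA₁ : SLHyp A₁) (hA₂ : SLHyp A₂)
    (hle : ∀ t > (0:ℝ), A₂ t ≤ A₁ t)
    (h1 : IsSL A₁ Φ₁) (h2 : IsSL A₂ Φ₂) :
    (∀ s t : ℝ, 0 ≤ s → s ≤ t → Φ₁ t * Φ₂ s ≤ Φ₂ t * Φ₁ s) ∧
    AntitoneOn (fun t => Φ₁ t / Φ₂ t) (Set.Ici 0) := by
  obtain ⟨hA₁c, hA₁pos, -, -⟩ := hA₁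
  obtain ⟨hA₂c, hA₂pos, -, -⟩ := hA₂
  have hA₁ : ∀ t > 0, 0 ≤ A₁ t := fun t ht => (hA₁pos t ht).le
  have hA₂ : ∀ t > 0, 0 ≤ A₂ t := fun t ht => (hA₂pos t ht).le
  have hanti := antitoneOn_div h1 h2 hA₁c hA₁ hA₂c hA₂ hle
  refine ⟨fun s t hs hst => ?_, hanti⟩
  have ht := hs.trans hst
  have hratio := hanti hs ht hst
  rw [div_le_div_iff₀ (h2.pos hA₂c hA₂ ht) (h2.pos hA₂c hA₂ hs)] at hratio
  linarith
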